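/- Every continuous group homomorphism from SU(3) to SU(2) is trivial. -/

import Mathlib

/-!
Let `ι : SU(2) → SU(3)` be the embedding `x ↦ 1 ⊕ x` and `T z = ι (diag (z, z̄))`.

`f` kills every `T z`. If `f ∘ ι` has commuting image, this holds because the Weyl element
conjugates `T w` to `T w⁻¹`, so `f (T w)` is an involution and `f (T (w²)) = 1`. Otherwise the
circle `c z = diag (z̄², z, z)`, which centralises `ι (SU(2))`, is mapped into the centraliser of
two non-commuting elements of `SU(2)`, which is `{±1}`; as every `c z` is a square, `f ∘ c = 1`,
and two conjugates of `c z` by the cyclic permutation matrix have quotient `T (z³)`.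

Hence the normal subgroup `ker f` contains every `T z`, so it contains `ι (SU(2))` (each element
of `SU(2)` is conjugate to a diagonal one) and its conjugate by the cyclic permutation, the
upper-left copy of `SU(2)`. Two Givens rotations from these copies bring any element of `SU(3)`
back into `ι (SU(2))`, so `ker f = SU(3)`.
-/

open Matrix Complex ComplexConjugate

local notation "SU₂" => specialUnitaryGroup (Fin 2) ℂ
local notation "SU₃" => specialUnitaryGroup (Fin 3) ℂ

namespace Matrix

variable {K : Type*} [Field K]

theorem exists_eq_smul_one_add_smul_of_commute {x y : Matrix (Fin 2) (Fin 2) K}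
    (hx : ∀ c : K, x ≠ scalar (Fin 2) c) (hxy : Commute x y) :
    ∃ α β : K, y = α • 1 + β • x := by
  have entry (i j : Fin 2) := congrFun (congrFun hxy.eq i) j
  simp only [mul_apply, Fin.sum_univ_two] at entry
  have e₀₀ := entry 0 0
  have e₀₁ := entry 0 1
  have e₁₀ := entry 1 0
  suffices ∃ β : K, y 0 1 = β * x 0 1 ∧ y 1 0 = β * x 1 0 ∧
      y 1 1 - y 0 0 = β * (x 1 1 - x 0 0) by
    obtain ⟨β, h₀₁, h₁₀, h₁₁⟩ := this
    refine ⟨y 0 0 - β * x 0 0, β, ?_⟩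
    ext i j
    fin_cases i <;> fin_cases j
    · simp
    · simp [h₀₁]
    · simp [h₁₀]
    · simp only [Fin.mk_one, Fin.isValue, add_apply, smul_apply, one_apply_eq, smul_eq_mul,
        mul_one]
      linear_combination h₁₁
  have : x 0 1 ≠ 0 ∨ x 1 0 ≠ 0 ∨ x 1 1 - x 0 0 ≠ 0 := by
    by_contra! h
    refine hx (x 0 0) ?_
    ext i j
    fin_cases i <;> fin_cases j <;> simp [h.1, h.2.1, sub_eq_zero.mp h.2.2]
  rcases this with h | h | h
  · exact ⟨y 0 1 / x 0 1, by field_simp, by field_simp; linear_combination e₀₀, by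
      field_simp; linear_combination e₀₁⟩
  · exact ⟨y 1 0 / x 1 0, by field_simp; linear_combination -e₀₀, by field_simp, by
      field_simp; linear_combination -e₁₀⟩
  · exact ⟨(y 1 1 - y 0 0) / (x 1 1 - x 0 0), by field_simp; linear_combination -e₀₁, by
      field_simp; linear_combination e₁₀, by field_simp⟩

theorem commute_of_commute_of_ne_scalar {x y z : Matrix (Fin 2) (Fin 2) K}
    (hx : ∀ c : K, x ≠ scalar (Fin 2) c) (hy : Commute x y) (hz : Commute x z) :
    Commute y z := by
  obtain ⟨α, β, rfl⟩ := exists_eq_smul_one_add_smul_of_commute hx hy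
  obtain ⟨α', β', rfl⟩ := exists_eq_smul_one_add_smul_of_commute hx hz
  apply_rules [Commute.add_left, Commute.add_right, Commute.smul_left, Commute.smul_right,
    Commute.one_left, Commute.one_right, Commute.refl]

theorem sum_normSq_apply_of_mem_unitaryGroup {n : Type*} [Fintype n] [DecidableEq n]
    {U : Matrix n n ℂ} (hU : U ∈ unitaryGroup n ℂ) (j : n) : ∑ i, normSq (U i j) = 1 := by
  have := congrFun (congrFun (mem_unitaryGroup_iff'.mp hU) j) j
  simp only [mul_apply, star_apply, RCLike.star_def, ← normSq_eq_conj_mul_self, one_apply_eq]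
    at this
  exact_mod_cast this

end Matrix

theorem Circle.exists_pow_eq {n : ℕ} (hn : n ≠ 0) (z : Circle) : ∃ w : Circle, w ^ n = z :=
  ⟨Circle.exp (arg z / n), by
    rw [← Circle.exp_natCast_mul, mul_div_cancel₀ _ (Nat.cast_ne_zero.mpr hn),
      Circle.exp_arg]⟩

namespace SU2

theorem mem_of_normSq_add_normSq_eq_one {a b : ℂ} (h : normSq a + normSq b = 1) :
    !![a, b; -conj b, conj a] ∈ SU₂ := by
  have h₁ : a * conj a + b * conj b = 1 := by simp only [mul_conj]; exact_mod_cast h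
  have h₂ : b * conj b + a * conj a = 1 := by linear_combination h₁
  refine mem_specialUnitaryGroup_iff.mpr
    ⟨mem_unitaryGroup_iff.mpr ?_, by simp [det_fin_two, h₁]⟩
  ext i j
  fin_cases i <;> fin_cases j <;> simp [star_eq_conjTranspose, mul_apply, h₁, h₂, mul_comm]

theorem eq_fin_two_of_mem {x : Matrix (Fin 2) (Fin 2) ℂ} (hx : x ∈ SU₂) :
    x = !![x 0 0, x 0 1; -conj (x 0 1), conj (x 0 0)] := by
  obtain ⟨hu, hdet⟩ := mem_specialUnitaryGroup_iff.mp hx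
  have h : xᴴ = x.adjugate := by
    rw [← star_eq_conjTranspose, ← inv_eq_right_inv (mem_unitaryGroup_iff.mp hu),
      Matrix.inv_def, hdet]
    simp
  rw [adjugate_fin_two] at h
  have h₁₁ : conj (x 0 0) = x 1 1 := by simpa using congrFun (congrFun h 0) 0
  have h₁₀ : x 1 0 = -conj (x 0 1) := by
    simpa using congrArg conj (congrFun (congrFun h 0) 1)
  rw [h₁₁, ← h₁₀]
  exact eta_fin_two x

theorem sq_eq_one_of_commute_of_not_commute {x y z : SU₂} (hy : Commute x y) (hz : Commute x z)
    (hyz : ¬Commute y z) : x ^ 2 = 1 := by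
  obtain ⟨c, hc⟩ : ∃ c, (x : Matrix (Fin 2) (Fin 2) ℂ) = scalar (Fin 2) c := by
    by_contra! h
    exact hyz (Subtype.ext (commute_of_commute_of_ne_scalar h (congrArg Subtype.val hy)
      (congrArg Subtype.val hz)))
  have hdet : c ^ 2 = 1 := by simpa [hc] using (mem_specialUnitaryGroup_iff.mp x.2).2
  exact Subtype.ext (by rw [SubmonoidClass.coe_pow, hc, ← map_pow, hdet, map_one]; rfl)

def diagCircle : Circle →* SU₂ where
  toFun z := ⟨!![(z : ℂ), 0; 0, conj (z : ℂ)], by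
    simpa using mem_of_normSq_add_normSq_eq_one (a := z) (b := 0) (by simp)⟩
  map_one' := Subtype.ext <| by simp [one_fin_two]
  map_mul' z w := Subtype.ext <| by simp

def weylElement : SU₂ :=
  ⟨!![0, 1; -1, 0], by simpa using mem_of_normSq_add_normSq_eq_one (a := 0) (b := 1) (by simp)⟩

theorem weylElement_mul_diagCircle_mul_inv (z : Circle) :
    weylElement * diagCircle z * weylElement⁻¹ = diagCircle z⁻¹ := Subtype.ext <| by
  rw [← star_eq_inv]
  ext i j
  fin_cases i <;> fin_cases j <;>
    simp [weylElement, diagCircle, specialUnitaryGroup.coe_star, star_eq_conjTranspose, mul_apply,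
      ← Circle.coe_inv_eq_conj]

theorem map_diagCircle_eq_one_of_commute {G : Type*} [Group G] (φ : SU₂ →* G)
    (hφ : ∀ a b, Commute (φ a) (φ b)) (z : Circle) : φ (diagCircle z) = 1 := by
  obtain ⟨w, rfl⟩ := Circle.exists_pow_eq two_ne_zero z
  have h : φ (diagCircle w⁻¹) = φ (diagCircle w) := by
    rw [← weylElement_mul_diagCircle_mul_inv, map_mul, map_mul, map_inv, (hφ _ _).eq,
      mul_inv_cancel_right]
  calc φ (diagCircle (w ^ 2)) = φ (diagCircle w) * φ (diagCircle w⁻¹) := by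
        rw [h, pow_two, map_mul, map_mul]
    _ = 1 := by rw [← map_mul, ← map_mul, mul_inv_cancel, map_one, map_one]

theorem exists_mulVec_eq (u v : ℂ) :
    ∃ g : SU₂,
      (g : Matrix (Fin 2) (Fin 2) ℂ) *ᵥ ![u, v] = ![(√(normSq u + normSq v) : ℂ), 0] := by
  set r := √(normSq u + normSq v)
  have hr2 : r ^ 2 = normSq u + normSq v :=
    Real.sq_sqrt (add_nonneg (normSq_nonneg u) (normSq_nonneg v))
  by_cases hr : r = 0
  · have hu : u = 0 := by rw [← normSq_eq_zero]; nlinarith [normSq_nonneg u, normSq_nonneg v]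
    have hv : v = 0 := by rw [← normSq_eq_zero]; nlinarith [normSq_nonneg u, normSq_nonneg v]
    exact ⟨1, by simp [hu, hv, hr]⟩
  have hr' : (r : ℂ) ≠ 0 := by exact_mod_cast hr
  have hnorm : normSq (conj u / r) + normSq (conj v / r) = 1 := by
    simp only [normSq_div, normSq_conj, normSq_ofReal]
    field_simp
    linarith
  refine ⟨⟨_, mem_of_normSq_add_normSq_eq_one hnorm⟩, ?_⟩
  have hr2' : (r : ℂ) ^ 2 = u * conj u + v * conj v := by
    simp only [mul_conj]; exact_mod_cast hr2
  refine funext (Fin.forall_fin_two.mpr ⟨?_, ?_⟩) <;>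
    simp only [mulVec, vec2_dotProduct, of_apply, cons_val_zero, cons_val_one, map_div₀,
      conj_conj, conj_ofReal]
  · field_simp
    linear_combination -hr2'
  · ring

theorem exists_eq_diagCircle_of_apply_one_zero {y : SU₂}
    (hy : (y : Matrix (Fin 2) (Fin 2) ℂ) 1 0 = 0) : ∃ z : Circle, y = diagCircle z := by
  have hform := eq_fin_two_of_mem y.2
  have h₀₁ : (y : Matrix (Fin 2) (Fin 2) ℂ) 0 1 = 0 := by
    simpa [hy] using congrFun (congrFun hform 1) 0
  have hdet := (mem_specialUnitaryGroup_iff.mp y.2).2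
  rw [hform, det_fin_two] at hdet
  have hnorm : ‖(y : Matrix (Fin 2) (Fin 2) ℂ) 0 0‖ = 1 := by
    have : normSq ((y : Matrix (Fin 2) (Fin 2) ℂ) 0 0) = 1 := by
      simp only [h₀₁, of_apply, cons_val', cons_val_zero, cons_val_one, empty_val',
        cons_val_fin_one, mul_conj, zero_mul, sub_zero] at hdet
      exact_mod_cast hdet
    exact (Complex.norm_def _).trans (by rw [this, Real.sqrt_one])
  refine ⟨⟨_, mem_sphere_zero_iff_norm.mpr hnorm⟩, Subtype.ext ?_⟩
  conv_lhs => rw [hform, h₀₁]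
  simp [diagCircle]

theorem exists_eq_mul_diagCircle_mul_inv (x : SU₂) :
    ∃ g : SU₂, ∃ z : Circle, x = g * diagCircle z * g⁻¹ := by
  obtain ⟨μ, hμ⟩ := Module.End.exists_eigenvalue (toLin' (x : Matrix (Fin 2) (Fin 2) ℂ))
  obtain ⟨v, hv, hv0⟩ := hμ.exists_hasEigenvector
  rw [Module.End.mem_eigenspace_iff, toLin'_apply] at hv
  obtain ⟨g, hg⟩ := exists_mulVec_eq (v 0) (v 1)
  rw [show ![v 0, v 1] = v by ext i; fin_cases i <;> rfl] at hg
  set r : ℂ := ((√(normSq (v 0) + normSq (v 1)) : ℝ) : ℂ)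
  have hr : r ≠ 0 := by
    intro hr
    have hsum : normSq (v 0) + normSq (v 1) ≤ 0 :=
      Real.sqrt_eq_zero'.mp (Complex.ofReal_eq_zero.mp hr)
    have h₀ := normSq_nonneg (v 0)
    have h₁ := normSq_nonneg (v 1)
    exact hv0 (funext (Fin.forall_fin_two.mpr
      ⟨normSq_eq_zero.mp (by linarith), normSq_eq_zero.mp (by linarith)⟩))
  -- `g` maps the eigenvector `v` to a multiple of `e₀`, so `g * x * g⁻¹` is upper triangular.
  obtain ⟨z, hz⟩ : ∃ z, g * x * g⁻¹ = diagCircle z := by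
    apply exists_eq_diagCircle_of_apply_one_zero
    have : ((g * x * g⁻¹ : SU₂) : Matrix (Fin 2) (Fin 2) ℂ) *ᵥ ![r, 0] =
        μ • ![r, 0] := by
      rw [← hg, mulVec_mulVec, ← Submonoid.coe_mul, inv_mul_cancel_right, Submonoid.coe_mul,
        ← mulVec_mulVec, hv, mulVec_smul]
    simpa [hr] using congrFun this 1
  exact ⟨g⁻¹, z, by rw [← hz]; group⟩

end SU2

section LowerBlock

variable {R : Type*} [CommRing R]

def lowerBlock (x : Matrix (Fin 2) (Fin 2) R) : Matrix (Fin 3) (Fin 3) R :=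
  !![1, 0, 0; 0, x 0 0, x 0 1; 0, x 1 0, x 1 1]

theorem lowerBlock_mul (x y : Matrix (Fin 2) (Fin 2) R) :
    lowerBlock (x * y) = lowerBlock x * lowerBlock y := by
  ext i j
  fin_cases i <;> fin_cases j <;> simp [lowerBlock, mul_apply, Fin.sum_univ_succ]

theorem lowerBlock_one : lowerBlock (1 : Matrix (Fin 2) (Fin 2) R) = 1 := by
  ext i j
  fin_cases i <;> fin_cases j <;> simp [lowerBlock]

theorem lowerBlock_injective : Function.Injective (lowerBlock (R := R)) := fun x y h => by
  ext i j
  have := congrFun (congrFun h i.succ) j.succ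
  fin_cases i <;> fin_cases j <;> simpa [lowerBlock] using this

theorem lowerBlock_conjTranspose [StarRing R] (x : Matrix (Fin 2) (Fin 2) R) :
    (lowerBlock x)ᴴ = lowerBlock xᴴ := by
  ext i j
  fin_cases i <;> fin_cases j <;> simp [lowerBlock]

theorem det_lowerBlock (x : Matrix (Fin 2) (Fin 2) R) : (lowerBlock x).det = x.det := by
  simp [lowerBlock, det_fin_three, det_fin_two]

theorem lowerBlock_mem_specialUnitaryGroup_iff [StarRing R] {x : Matrix (Fin 2) (Fin 2) R} :
    lowerBlock x ∈ specialUnitaryGroup (Fin 3) R ↔ x ∈ specialUnitaryGroup (Fin 2) R := by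
  simp only [mem_specialUnitaryGroup_iff, mem_unitaryGroup_iff, star_eq_conjTranspose,
    lowerBlock_conjTranspose, ← lowerBlock_mul, ← lowerBlock_one, lowerBlock_injective.eq_iff,
    det_lowerBlock]

end LowerBlock

namespace SU3

open SU2

def embLower : SU₂ →* SU₃ where
  toFun x := ⟨lowerBlock x.1, lowerBlock_mem_specialUnitaryGroup_iff (R := ℂ) |>.mpr x.2⟩
  map_one' := Subtype.ext lowerBlock_one
  map_mul' x y := Subtype.ext (lowerBlock_mul x.1 y.1)

def cyclePerm : SU₃ :=
  ⟨!![0, 0, 1; 1, 0, 0; 0, 1, 0], by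
    refine mem_specialUnitaryGroup_iff.mpr
      ⟨mem_unitaryGroup_iff.mpr ?_, by simp [det_fin_three]⟩
    ext i j
    fin_cases i <;> fin_cases j <;> simp [star_eq_conjTranspose, mul_apply, Fin.sum_univ_succ]⟩

def embUpper : SU₂ →* SU₃ := (MulAut.conj cyclePerm⁻¹).toMonoidHom.comp embLower

theorem coe_embUpper (x : SU₂) : (embUpper x : Matrix (Fin 3) (Fin 3) ℂ) =
    !![x.1 0 0, x.1 0 1, 0; x.1 1 0, x.1 1 1, 0; 0, 0, 1] := by
  ext i j
  fin_cases i <;> fin_cases j <;>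
    simp [embUpper, embLower, lowerBlock, cyclePerm, ← star_eq_inv, specialUnitaryGroup.coe_star,
      star_eq_conjTranspose, mul_apply, Fin.sum_univ_succ]

def lowerCentralizer : Circle →* SU₃ where
  toFun z := ⟨diagonal ![conj (z : ℂ) ^ 2, z, z], by
    refine mem_specialUnitaryGroup_iff.mpr ⟨mem_unitaryGroup_iff.mpr ?_, ?_⟩
    · ext i j
      fin_cases i <;> fin_cases j <;>
        simp [star_eq_conjTranspose, ← mul_pow, mul_conj', conj_mul', Circle.norm_coe]
    · simp [Fin.prod_univ_succ, ← Circle.coe_inv_eq_conj, sq, mul_mul_mul_comm]⟩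
  map_one' := Subtype.ext <| by ext i j; fin_cases i <;> fin_cases j <;> simp
  map_mul' z w := Subtype.ext <| by
    ext i j
    fin_cases i <;> fin_cases j <;> simp [mul_pow]

theorem commute_lowerCentralizer_embLower (z : Circle) (x : SU₂) :
    Commute (lowerCentralizer z) (embLower x) := Subtype.ext <| by
  ext i j
  simp only [Submonoid.coe_mul, mul_apply, Fin.sum_univ_succ, Fin.sum_univ_zero]
  fin_cases i <;> fin_cases j <;> simp [lowerCentralizer, embLower, lowerBlock, mul_comm]

theorem embLower_diagCircle_pow_three (z : Circle) :
    embLower (diagCircle (z ^ 3)) =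
      (cyclePerm * lowerCentralizer z * cyclePerm⁻¹)⁻¹ *
        (cyclePerm⁻¹ * lowerCentralizer z * cyclePerm) := by
  simp only [← star_eq_inv]
  apply Subtype.ext
  ext i j
  simp only [Submonoid.coe_mul, specialUnitaryGroup.coe_star, star_eq_conjTranspose, mul_apply,
    Fin.sum_univ_succ, Fin.sum_univ_zero, conjTranspose_apply]
  fin_cases i <;> fin_cases j <;>
    simp [lowerCentralizer, embLower, lowerBlock, diagCircle, cyclePerm, mul_conj',
      Circle.norm_coe, pow_succ, mul_comm]

theorem exists_eq_embLower_of_apply_zero_zero {M : SU₃}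
    (h : (M : Matrix (Fin 3) (Fin 3) ℂ) 0 0 = 1) : ∃ V : SU₂, M = embLower V := by
  set m : Matrix (Fin 3) (Fin 3) ℂ := M.1
  have hm : star m * m = 1 := mem_unitaryGroup_iff'.mp (mem_specialUnitaryGroup_iff.mp M.2).1
  have e₁₀ := congrFun (congrFun hm 1) 0
  have e₂₀ := congrFun (congrFun hm 2) 0
  simp only [mul_apply, Fin.sum_univ_three, star_apply, RCLike.star_def, h, mul_one,
    one_apply_ne, ne_eq, Fin.reduceEq, not_false_eq_true] at e₁₀ e₂₀
  have hcol : normSq (m 1 0) + normSq (m 2 0) = 0 := by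
    have := sum_normSq_apply_of_mem_unitaryGroup (U := m)
      (mem_specialUnitaryGroup_iff.mp M.2).1 0
    rw [Fin.sum_univ_three, h, normSq_one] at this
    linarith
  have h₁₀ : m 1 0 = 0 := by
    rw [← normSq_eq_zero]; linarith [normSq_nonneg (m 1 0), normSq_nonneg (m 2 0)]
  have h₂₀ : m 2 0 = 0 := by
    rw [← normSq_eq_zero]; linarith [normSq_nonneg (m 1 0), normSq_nonneg (m 2 0)]
  have h₀₁ : m 0 1 = 0 := by simpa [h₁₀, h₂₀] using e₁₀
  have h₀₂ : m 0 2 = 0 := by simpa [h₁₀, h₂₀] using e₂₀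
  have hV : m = lowerBlock (m.submatrix Fin.succ Fin.succ) := by
    ext i j
    fin_cases i <;> fin_cases j <;> simp [lowerBlock, h, h₁₀, h₂₀, h₀₁, h₀₂]
  exact ⟨⟨_, lowerBlock_mem_specialUnitaryGroup_iff.mp (hV ▸ M.2)⟩, Subtype.ext hV⟩

theorem exists_eq_embLower_mul_embUpper_mul_embLower (A : SU₃) :
    ∃ g₁ g₂ g₃ : SU₂, A = embLower g₁ * embUpper g₂ * embLower g₃ := by
  obtain ⟨g₁, hg₁⟩ := exists_mulVec_eq (A.1 1 0) (A.1 2 0)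
  set y := embLower g₁ * A
  have hy : y.1 2 0 = 0 := by
    simpa [y, embLower, lowerBlock, mul_apply, Fin.sum_univ_three, mulVec, dotProduct,
      Fin.sum_univ_two] using congrFun hg₁ 1
  obtain ⟨g₂, hg₂⟩ := exists_mulVec_eq (y.1 0 0) (y.1 1 0)
  set M := embUpper g₂ * y
  have hM₀₀ : M.1 0 0 = (√(normSq (y.1 0 0) + normSq (y.1 1 0)) : ℝ) := by
    simpa [M, coe_embUpper, mul_apply, Fin.sum_univ_three, mulVec, dotProduct, Fin.sum_univ_two]
      using congrFun hg₂ 0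
  have hM₁₀ : M.1 1 0 = 0 := by
    simpa [M, coe_embUpper, mul_apply, Fin.sum_univ_three, mulVec, dotProduct, Fin.sum_univ_two]
      using congrFun hg₂ 1
  have hM₂₀ : M.1 2 0 = 0 := by
    simpa [M, coe_embUpper, mul_apply, Fin.sum_univ_three] using hy
  -- The first column of `M` is a unit vector `(r, 0, 0)` with `r ≥ 0`, hence `r = 1`.
  obtain ⟨V, hV⟩ : ∃ V, M = embLower V := by
    apply exists_eq_embLower_of_apply_zero_zero
    have hnorm := sum_normSq_apply_of_mem_unitaryGroup (mem_specialUnitaryGroup_iff.mp M.2).1 0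
    rw [Fin.sum_univ_three, hM₀₀, hM₁₀, hM₂₀, normSq_ofReal, normSq_zero] at hnorm
    rw [hM₀₀, ofReal_eq_one]
    nlinarith [Real.sqrt_nonneg (normSq (y.1 0 0) + normSq (y.1 1 0))]
  exact ⟨g₁⁻¹, g₂⁻¹, V, by rw [← hV]; simp [M, y]⟩

theorem embLower_diagCircle_mem_of_lowerCentralizer_mem (N : Subgroup SU₃) [hN : N.Normal]
    (h : ∀ z, lowerCentralizer z ∈ N) (z : Circle) : embLower (diagCircle z) ∈ N := by
  obtain ⟨w, rfl⟩ := Circle.exists_pow_eq three_ne_zero z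
  rw [embLower_diagCircle_pow_three]
  refine N.mul_mem (N.inv_mem (hN.conj_mem _ (h w) _)) ?_
  simpa using hN.conj_mem _ (h w) cyclePerm⁻¹

theorem eq_top_of_embLower_diagCircle_mem (N : Subgroup SU₃) [hN : N.Normal]
    (h : ∀ z, embLower (diagCircle z) ∈ N) : N = ⊤ := by
  have hLower (x : SU₂) : embLower x ∈ N := by
    obtain ⟨g, z, rfl⟩ := exists_eq_mul_diagCircle_mul_inv x
    simpa using hN.conj_mem _ (h z) (embLower g)
  have hUpper (x : SU₂) : embUpper x ∈ N := hN.conj_mem _ (hLower x) cyclePerm⁻¹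
  refine eq_top_iff.mpr fun A _ => ?_
  obtain ⟨g₁, g₂, g₃, rfl⟩ := exists_eq_embLower_mul_embUpper_mul_embLower A
  exact N.mul_mem (N.mul_mem (hLower g₁) (hUpper g₂)) (hLower g₃)

theorem map_embLower_diagCircle_eq_one (f : SU₃ →* SU₂) (z : Circle) :
    f (embLower (diagCircle z)) = 1 := by
  by_cases hcomm : ∀ a b, Commute (f (embLower a)) (f (embLower b))
  · exact map_diagCircle_eq_one_of_commute (f.comp embLower) hcomm z
  push Not at hcomm
  obtain ⟨a, b, hab⟩ := hcomm
  have hc (w : Circle) : f (lowerCentralizer w) = 1 := by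
    obtain ⟨u, rfl⟩ := Circle.exists_pow_eq two_ne_zero w
    rw [map_pow, map_pow]
    exact sq_eq_one_of_commute_of_not_commute ((commute_lowerCentralizer_embLower u a).map f)
      ((commute_lowerCentralizer_embLower u b).map f) hab
  exact embLower_diagCircle_mem_of_lowerCentralizer_mem f.ker (fun w => f.mem_ker.mpr (hc w)) z

end SU3

open SU3

theorem su3_to_su2_trivial_general
    (f : Matrix.specialUnitaryGroup (Fin 3) ℂ →* Matrix.specialUnitaryGroup (Fin 2) ℂ) :
    ∀ A : Matrix.specialUnitaryGroup (Fin 3) ℂ, f A = 1 := by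
  have hker : f.ker = ⊤ := eq_top_of_embLower_diagCircle_mem f.ker fun z =>
    f.mem_ker.mpr (map_embLower_diagCircle_eq_one f z)
  exact fun A => f.mem_ker.mp (hker ▸ Subgroup.mem_top A)

/-- Every continuous group homomorphism from SU(3) to SU(2) is trivial. -/
theorem su3_to_su2_trivial
    (f : Matrix.specialUnitaryGroup (Fin 3) ℂ →* Matrix.specialUnitaryGroup (Fin 2) ℂ)
    (hf : Continuous f) :
    ∀ A : Matrix.specialUnitaryGroup (Fin 3) ℂ, f A = 1 :=
  su3_to_su2_trivial_general f
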